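/- Under Conditions 1 and 2, the rescaled mean of the energy increment converges: lim_{h → 0} μ(h)/h⁴ = Σ/2, where Σ = ∫ α(x)² e^{−H(x)} dx. -/

import Mathlib

/-! With `T = S ∘ ψ_h`, reversibility makes `T` a volume-preserving involution with
`H ∘ T = H ∘ ψ_h`, so the change of variables `x ↦ T x` turns `Δ` into `-Δ` and the weight
`e^{-H}` into `e^{-Δ} e^{-H}`. Hence `∫ k(Δ) e^{-H} = 0` for every `k` with
`k(-t) e^{-t} = -k(t)`. For `k(t) = t - t²/2 - R(t)`, with `R` vanishing on `t ≤ 0`,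
`|R(t)| ≤ t²` and `R(t) = O(|t|³)` at `0`, this gives `μ(h) = s²(h)/2 + ∫ R(Δ) e^{-H}`.
Condition 2 dominates both integrands by `h⁴ D e^{-H}`, and Condition 1 gives the pointwise
limits `Δ²/h⁴ → α²` and `R(Δ)/h⁴ → 0`, so dominated convergence yields `μ(h)/h⁴ → Σ/2`. -/

open MeasureTheory Filter

open Function Real Topology Set

/-- Forced by asking that `t - t ^ 2 / 2 - fluctuationRemainder t` be skew in the sense of
`fluctuationRemainder_skew` and that `fluctuationRemainder` vanish on `t ≤ 0`. -/
noncomputable def fluctuationRemainder (t : ℝ) : ℝ :=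
  max t 0 * (1 - exp (-t)) - max t 0 ^ 2 * (1 + exp (-t)) / 2

theorem measurable_fluctuationRemainder : Measurable fluctuationRemainder := by
  unfold fluctuationRemainder; fun_prop

theorem fluctuationRemainder_skew (t : ℝ) :
    (-t - (-t) ^ 2 / 2 - fluctuationRemainder (-t)) * exp (-t)
      = -(t - t ^ 2 / 2 - fluctuationRemainder t) := by
  have hmul : exp t * exp (-t) = 1 := by rw [← exp_add, add_neg_cancel, exp_zero]
  unfold fluctuationRemainder
  rcases le_total t 0 with ht | ht
  · rw [max_eq_left (neg_nonneg.mpr ht), max_eq_right ht, neg_neg]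
    linear_combination (-t + t ^ 2 / 2) * hmul
  · rw [max_eq_right (neg_nonpos.mpr ht), max_eq_left ht]
    ring

theorem abs_fluctuationRemainder_le_sq (t : ℝ) : |fluctuationRemainder t| ≤ t ^ 2 := by
  unfold fluctuationRemainder
  rcases le_total t 0 with ht | ht
  · simp [max_eq_right ht, sq_nonneg]
  · have h1 : exp (-t) ≤ 1 := exp_le_one_iff.mpr (by linarith)
    have h2 : 1 - t ≤ exp (-t) := by linarith [add_one_le_exp (-t)]
    have h3 : 0 < exp (-t) := exp_pos _
    rw [max_eq_left ht, abs_le]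
    constructor <;> nlinarith

theorem abs_fluctuationRemainder_le_abs_pow_three {t : ℝ} (ht : |t| ≤ 1) :
    |fluctuationRemainder t| ≤ 2 * |t| ^ 3 := by
  unfold fluctuationRemainder
  rcases le_total t 0 with ht0 | ht0
  · simp [max_eq_right ht0]
  · have hs := abs_exp_sub_one_sub_id_le (x := -t) (by rwa [abs_neg])
    rw [abs_of_nonneg ht0] at ht ⊢
    rw [max_eq_left ht0, abs_le] at *
    obtain ⟨hs1, hs2⟩ := hs
    constructor <;> nlinarith [mul_nonneg ht0 ht0, mul_nonneg (mul_nonneg ht0 ht0) ht0]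

theorem tendsto_fluctuationRemainder_mul_div_sq {ι : Type*} {l : Filter ι} {c u : ι → ℝ}
    {a : ℝ} (hc : Tendsto c l (𝓝 0)) (hu : Tendsto u l (𝓝 a)) :
    Tendsto (fun i => fluctuationRemainder (c i * u i) / c i ^ 2) l (𝓝 0) := by
  have hbound : Tendsto (fun i => 2 * (|c i| * |u i| ^ 3)) l (𝓝 0) := by
    simpa using ((hc.abs.mul (hu.abs.pow 3)).const_mul 2)
  have hsmall : ∀ᶠ i in l, |c i * u i| ≤ 1 := by
    have : Tendsto (fun i => c i * u i) l (𝓝 0) := by simpa using hc.mul hu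
    exact (this.abs.eventually_lt_const (by simpa using zero_lt_one)).mono fun i hi => by
      simpa using hi.le
  refine squeeze_zero_norm' ?_ hbound
  filter_upwards [hsmall] with i hi
  rcases eq_or_ne (c i) 0 with hc0 | hc0
  · simp [hc0]
  rw [norm_div, norm_pow, Real.norm_eq_abs, Real.norm_eq_abs,
    div_le_iff₀ (by positivity)]
  calc |fluctuationRemainder (c i * u i)| ≤ 2 * |c i * u i| ^ 3 :=
        abs_fluctuationRemainder_le_abs_pow_three hi
    _ = 2 * (|c i| * |u i| ^ 3) * |c i| ^ 2 := by rw [abs_mul]; ring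

section Fluctuation

variable {X : Type*} [MeasurableSpace X] {ν : Measure X}

theorem integral_comp_sub_mul_exp_eq_zero {T : X → X} (hT : Involutive T)
    (hTν : MeasurePreserving T ν ν) (H : X → ℝ) {k : ℝ → ℝ}
    (hk : ∀ t, k (-t) * exp (-t) = -k t) :
    ∫ x, k (H (T x) - H x) * exp (-H x) ∂ν = 0 := by
  set f := fun x => k (H (T x) - H x) * exp (-H x)
  have hflip : ∀ x, f (T x) = -f x := fun x => by
    simp only [f, hT x]
    rw [show H x - H (T x) = -(H (T x) - H x) by ring,
      show -H (T x) = -(H (T x) - H x) + -H x by ring, exp_add, ← mul_assoc, hk, neg_mul]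
  have := hTν.integral_comp' (f := MeasurableEquiv.ofInvolutive T hT hTν.measurable) f
  simp only [MeasurableEquiv.ofInvolutive_apply, hflip, integral_neg] at this
  linarith

theorem integrable_comp_mul_of_sq_le {φ : ℝ → ℝ} (hφ : Measurable φ)
    (hφ_le : ∀ t, |φ t| ≤ 1 + t ^ 2) {Δ w B : X → ℝ} (hΔ : Measurable Δ)
    (hΔ_le : ∀ x, Δ x ^ 2 ≤ B x) (hw : Integrable w ν) (hw0 : ∀ x, 0 ≤ w x)
    (hBw : Integrable (fun x => B x * w x) ν) :
    Integrable (fun x => φ (Δ x) * w x) ν := by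
  refine (hw.add hBw).mono' ((hφ.comp hΔ).aestronglyMeasurable.mul hw.aestronglyMeasurable)
    (ae_of_all _ fun x => ?_)
  rw [norm_mul, Real.norm_eq_abs, Real.norm_of_nonneg (hw0 x)]
  calc |φ (Δ x)| * w x ≤ (1 + B x) * w x := by
        gcongr
        · exact hw0 x
        · exact (hφ_le _).trans (by linarith [hΔ_le x])
    _ = w x + B x * w x := by ring

theorem integral_sub_mul_exp_eq_half_integral_sq_add {T : X → X} (hT : Involutive T)
    (hTν : MeasurePreserving T ν ν) {H : X → ℝ} (hH : Measurable H) {B : X → ℝ}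
    (hΔ_le : ∀ x, (H (T x) - H x) ^ 2 ≤ B x) (hw : Integrable (fun x => exp (-H x)) ν)
    (hBw : Integrable (fun x => B x * exp (-H x)) ν) :
    ∫ x, (H (T x) - H x) * exp (-H x) ∂ν
      = (∫ x, (H (T x) - H x) ^ 2 * exp (-H x) ∂ν) / 2
        + ∫ x, fluctuationRemainder (H (T x) - H x) * exp (-H x) ∂ν := by
  have hΔ : Measurable fun x => H (T x) - H x := (hH.comp hTν.measurable).sub hH
  have hint {φ : ℝ → ℝ} (hφ : Measurable φ) (hφ_le : ∀ t, |φ t| ≤ 1 + t ^ 2) :=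
    integrable_comp_mul_of_sq_le hφ hφ_le hΔ hΔ_le hw (fun x => (exp_pos _).le) hBw
  have hΔw := hint (φ := fun t => t) measurable_id fun t => by
    nlinarith [abs_nonneg t, sq_abs t]
  have hΔsqw := hint (φ := fun t => t ^ 2) (measurable_id.pow_const 2) fun t => by
    simp [abs_of_nonneg (sq_nonneg t)]
  have hremw := hint measurable_fluctuationRemainder fun t => by
    linarith [abs_fluctuationRemainder_le_sq t]
  have hskew := integral_comp_sub_mul_exp_eq_zero hT hTν H
    (k := fun t => t - t ^ 2 / 2 - fluctuationRemainder t) fluctuationRemainder_skew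
  rw [show (fun x => (H (T x) - H x - (H (T x) - H x) ^ 2 / 2
      - fluctuationRemainder (H (T x) - H x)) * exp (-H x))
      = fun x => (H (T x) - H x) * exp (-H x) - (H (T x) - H x) ^ 2 * exp (-H x) / 2
        - fluctuationRemainder (H (T x) - H x) * exp (-H x) by ext; ring] at hskew
  rw [integral_sub (hΔw.sub' (hΔsqw.div_const 2)) hremw, integral_sub hΔw (hΔsqw.div_const 2),
    integral_div] at hskew
  linarith

theorem tendsto_integral_comp_mul_div_pow_four {φ : ℝ → ℝ} (hφ : Measurable φ)
    (hφ_le : ∀ t, |φ t| ≤ t ^ 2) {Δ : ℝ → X → ℝ} {w D F : X → ℝ}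
    (hΔ : ∀ᶠ h in 𝓝[>] 0, Measurable (Δ h))
    (hΔ_le : ∀ᶠ h in 𝓝[>] 0, ∀ x, Δ h x ^ 2 ≤ h ^ 4 * D x)
    (hw : Measurable w) (hw0 : ∀ x, 0 ≤ w x) (hDw : Integrable (fun x => D x * w x) ν)
    (hlim : ∀ x, Tendsto (fun h => φ (Δ h x) / h ^ 4) (𝓝[>] 0) (𝓝 (F x))) :
    Tendsto (fun h => (∫ x, φ (Δ h x) * w x ∂ν) / h ^ 4) (𝓝[>] 0)
      (𝓝 (∫ x, F x * w x ∂ν)) := by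
  simp_rw [← integral_div]
  refine tendsto_integral_filter_of_dominated_convergence _ ?_ ?_ hDw
    (ae_of_all _ fun x => ?_)
  · filter_upwards [hΔ] with h hh
    exact (((hφ.comp hh).mul hw).div_const _).aestronglyMeasurable
  · filter_upwards [hΔ_le, self_mem_nhdsWithin] with h hle (hpos : 0 < h)
    refine ae_of_all _ fun x => ?_
    rw [norm_div, norm_mul, Real.norm_eq_abs, Real.norm_of_nonneg (hw0 x),
      Real.norm_of_nonneg (by positivity), div_le_iff₀ (by positivity)]
    calc |φ (Δ h x)| * w x ≤ h ^ 4 * D x * w x := by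
          gcongr
          · exact hw0 x
          · exact (hφ_le _).trans (hle x)
      _ = D x * w x * h ^ 4 := by ring
  · simpa only [mul_div_right_comm] using (hlim x).mul_const (w x)

theorem tendsto_integral_sub_mul_exp_div_pow_four {T : ℝ → X → X}
    (hT : ∀ᶠ h in 𝓝[>] 0, Involutive (T h))
    (hTν : ∀ᶠ h in 𝓝[>] 0, MeasurePreserving (T h) ν ν) {H : X → ℝ} (hH : Measurable H)
    (hw : Integrable (fun x => exp (-H x)) ν) {D : X → ℝ}
    (hΔ_le : ∀ᶠ h in 𝓝[>] 0, ∀ x, (H (T h x) - H x) ^ 2 ≤ h ^ 4 * D x)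
    (hDw : Integrable (fun x => D x * exp (-H x)) ν) {u : ℝ → X → ℝ} {a : X → ℝ}
    (hΔ_eq : ∀ x, ∀ᶠ h in 𝓝[>] 0, H (T h x) - H x = h ^ 2 * u h x)
    (hu : ∀ x, Tendsto (u · x) (𝓝[>] 0) (𝓝 (a x))) :
    Tendsto (fun h => (∫ x, (H (T h x) - H x) * exp (-H x) ∂ν) / h ^ 4) (𝓝[>] 0)
      (𝓝 ((∫ x, a x ^ 2 * exp (-H x) ∂ν) / 2)) := by
  have hΔ : ∀ᶠ h in 𝓝[>] 0, Measurable fun x => H (T h x) - H x := by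
    filter_upwards [hTν] with h hh using (hH.comp hh.measurable).sub hH
  have hw_meas : Measurable fun x => exp (-H x) := hH.neg.exp
  have hw0 : ∀ x, 0 ≤ exp (-H x) := fun x => (exp_pos _).le
  have hsq : Tendsto (fun h : ℝ => h ^ 2) (𝓝[>] 0) (𝓝 0) := by
    simpa using ((continuous_pow 2).tendsto (0 : ℝ)).mono_left nhdsWithin_le_nhds
  have hvar := tendsto_integral_comp_mul_div_pow_four (φ := fun t => t ^ 2)
    (F := fun x => a x ^ 2) (measurable_id.pow_const 2)
    (fun t => by simp [abs_of_nonneg (sq_nonneg t)]) hΔ hΔ_le hw_meas hw0 hDw fun x => by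
      refine ((hu x).pow 2).congr' ?_
      filter_upwards [hΔ_eq x, self_mem_nhdsWithin] with h hh (hpos : 0 < h)
      rw [hh]; field_simp
  have hrem := tendsto_integral_comp_mul_div_pow_four (F := fun _ => 0)
    measurable_fluctuationRemainder abs_fluctuationRemainder_le_sq hΔ hΔ_le hw_meas hw0 hDw
    fun x => by
      refine (tendsto_fluctuationRemainder_mul_div_sq hsq (hu x)).congr' ?_
      filter_upwards [hΔ_eq x] with h hh
      rw [hh, ← pow_mul]
  simp only [zero_mul, integral_zero] at hrem
  have hlim := (hvar.div_const 2).add hrem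
  rw [add_zero] at hlim
  refine hlim.congr' ?_
  filter_upwards [hT, hTν, hΔ_le] with h hT hTν hΔ_le
  rw [integral_sub_mul_exp_eq_half_integral_sq_add hT hTν hH hΔ_le hw
    (by simpa only [mul_assoc] using hDw.const_mul (h ^ 4)), add_div, div_right_comm]

end Fluctuation

theorem measurePreserving_prodMap_id_neg {E F : Type*} [MeasureSpace E] [MeasureSpace F]
    [SFinite (volume : Measure E)] [SFinite (volume : Measure F)] [Neg F] [MeasurableNeg F]
    [(volume : Measure F).IsNegInvariant] :
    MeasurePreserving (fun x : E × F => (x.1, -x.2)) volume volume := by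
  rw [Measure.volume_eq_prod]
  exact (MeasurePreserving.id volume).prod (Measure.measurePreserving_neg volume)

theorem involutive_reflect_comp_of_reversible {E F : Type*} [InvolutiveNeg F]
    {e : E × F ≃ E × F}
    (he : ∀ x, ((e.symm (x.1, -x.2)).1, -(e.symm (x.1, -x.2)).2) = e x) :
    Involutive fun x => ((e x).1, -(e x).2) := by
  intro x
  have hx := he ((e x).1, -(e x).2)
  simp only [neg_neg, Prod.mk.eta, Equiv.symm_apply_apply] at hx
  simp [← hx]

theorem stmt_5 (m : ℕ)
    (H : ((Fin m → ℝ) × (Fin m → ℝ)) → ℝ) (hHmeas : Measurable H)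
    (hHS : ∀ x : (Fin m → ℝ) × (Fin m → ℝ), H (x.1, -x.2) = H x)
    (hHnorm : ∫ x : (Fin m → ℝ) × (Fin m → ℝ), Real.exp (-H x) = 1)
    (ψ : ℝ → ((Fin m → ℝ) × (Fin m → ℝ)) ≃ ((Fin m → ℝ) × (Fin m → ℝ)))
    (hψvol : ∀ h ∈ Set.Ioc (0:ℝ) 1, MeasurePreserving (ψ h) volume volume)
    (hψrev : ∀ h ∈ Set.Ioc (0:ℝ) 1, ∀ x : (Fin m → ℝ) × (Fin m → ℝ),
      (((ψ h).symm (x.1, -x.2)).1, -((ψ h).symm (x.1, -x.2)).2) = ψ h x)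
    -- Condition 1
    (α : ((Fin m → ℝ) × (Fin m → ℝ)) → ℝ) (ρ : ((Fin m → ℝ) × (Fin m → ℝ)) → ℝ → ℝ)
    (hcond1 : ∀ x, ∀ h ∈ Set.Ioc (0:ℝ) 1,
      H (ψ h x) - H x = h ^ 2 * α x + h ^ 2 * ρ x h)
    (hρ : ∀ x, Tendsto (ρ x) (nhdsWithin 0 (Set.Ioi 0)) (nhds 0))
    -- Condition 2
    (D : ((Fin m → ℝ) × (Fin m → ℝ)) → ℝ)
    (hcond2 : ∀ x, ∀ h ∈ Set.Ioc (0:ℝ) 1, (H (ψ h x) - H x) ^ 2 / h ^ 4 ≤ D x)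
    (hD : Integrable (fun x => D x * Real.exp (-H x))) :
    Tendsto (fun h : ℝ => (∫ x, (H (ψ h x) - H x) * Real.exp (-H x)) / h ^ 4)
      (nhdsWithin 0 (Set.Ioi 0)) (nhds ((∫ x, (α x) ^ 2 * Real.exp (-H x)) / 2))
 := by
  have hev : Ioc (0 : ℝ) 1 ∈ 𝓝[>] 0 := Ioc_mem_nhdsGT zero_lt_one
  have hw : Integrable fun x => exp (-H x) := .of_integral_ne_zero (by simp [hHnorm])
  have key := tendsto_integral_sub_mul_exp_div_pow_four (ν := volume)
    (T := fun h x => ((ψ h x).1, -(ψ h x).2)) (u := fun h x => α x + ρ x h) (D := D)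
    (eventually_of_mem hev fun h hh => involutive_reflect_comp_of_reversible (hψrev h hh))
    (eventually_of_mem hev fun h hh => measurePreserving_prodMap_id_neg.comp (hψvol h hh))
    hHmeas hw
    (eventually_of_mem hev fun h hh x => by
      rw [hHS, ← div_le_iff₀' (pow_pos hh.1 4)]; exact hcond2 x h hh)
    hD (fun x => eventually_of_mem hev fun h hh => by rw [hHS, hcond1 x h hh]; ring)
    fun x => by simpa using (hρ x).const_add (α x)
  simpa only [hHS] using key
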